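/- arXiv:1311.7662 — 5 statements merged into one kernel-verified Lean document; each statement's English description precedes it below -/
import Mathlib

section
/- For every positive integer r, there exists a finite set of n = 2^r points x_1, ..., x_n in a Euclidean space, such that, defining the similarity matrix S ∈ {±1}^{n×n} by S_ij = 1 if ‖x_i − x_j‖ ≤ 1 and S_ij = −1 otherwise, the following two properties hold: (a) there exist matrices U, V ∈ {±1}^{2r×n} (with columns u_1,...,u_n and v_1,...,v_n) and a threshold θ ∈ ℝ such that S_ij·(⟨u_i, v_j⟩ − θ) > 0 for all 1 ≤ i, j ≤ n; and (b) for every positive integer k, every matrix U ∈ {±1}^{k×n} (with columns u_1,...,u_n), and every θ ∈ ℝ such that S_ij·(⟨u_i, u_j⟩ − θ) > 0 for all 1 ≤ i, j ≤ n, one must have k ≥ 2^r / 2. -/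
/-!
Split the `2 ^ r` points into two clusters of `M = 2 ^ (r - 1)` points each, placed as two
centred regular simplices in orthogonal subspaces and scaled so that two distinct points are
within distance `1` exactly when they lie in different clusters.

An asymmetric code of length `2r`: both `u i` and `v i` start with the `r` sign bits of `i`; then
`u i` repeats the cluster sign of `i` and `v i` its negative `r` times. With `θ = -1` the bits
contribute `r` on the diagonal and at most `r - 2` elsewhere, the cluster block `-r` within a
cluster and `+r` across.

A symmetric code of length `k` turns the threshold into a Hamming radius `a`: distances across
clusters are at most `a`, distances within a cluster exceed `a`. Pairing the clusters as
`p l, q l`, the vectors `w l = p l - q l` satisfy `‖w l‖² ≤ 4a` and `⟪w l, w m⟫ ≤ -4` for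
`l ≠ m`, so `0 ≤ ‖∑ l, w l‖²` forces `M ≤ a + 1 ≤ k`.
-/

open Finset Function

def ClusterSim {ι : Type*} (g : ι → Bool) (i j : ι) : Prop := i = j ∨ g i ≠ g j

def Realizes {ι τ : Type*} [Fintype τ] (P : ι → ι → Prop) (u v : ι → τ → ℝ) (θ : ℝ) : Prop :=
  ∀ i j, (P i j → θ < ∑ t, u i t * v j t) ∧ (¬ P i j → ∑ t, u i t * v j t < θ)

section Realizes

variable {ι τ : Type*} [Fintype τ] {P : ι → ι → Prop} {u v : ι → τ → ℝ} {θ : ℝ}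

theorem realizes_iff_forall_pos [DecidableRel P] :
    Realizes P u v θ ↔ ∀ i j, 0 < (if P i j then 1 else -1) * ((∑ t, u i t * v j t) - θ) := by
  refine forall₂_congr fun i j => ?_
  split_ifs with h <;> simp [h]

theorem Realizes.comp {ι' : Type*} (h : Realizes P u v θ) (f : ι' → ι) :
    Realizes (fun i j => P (f i) (f j)) (fun i => u (f i)) (fun j => v (f j)) θ :=
  fun i j => h (f i) (f j)

theorem Realizes.reindex {τ' : Type*} [Fintype τ'] (h : Realizes P u v θ) (e : τ' ≃ τ) :
    Realizes P (fun i => u i ∘ e) (fun j => v j ∘ e) θ := by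
  intro i j
  simpa only [comp_apply, e.sum_comp fun t => u i t * v j t] using h i j

end Realizes

theorem sum_mul_eq_card_sub_two_mul_hammingDist {τ : Type*} [Fintype τ] {x y : τ → ℝ}
    (hx : ∀ t, x t = 1 ∨ x t = -1) (hy : ∀ t, y t = 1 ∨ y t = -1) :
    ∑ t, x t * y t = Fintype.card τ - 2 * hammingDist x y := by
  have hterm : ∀ t, x t * y t = 1 - 2 * if x t ≠ y t then 1 else 0 := by
    intro t
    rcases hx t with h | h <;> rcases hy t with h' | h' <;> norm_num [h, h']
  simp only [hterm, sum_sub_distrib, ← mul_sum, sum_boole, hammingDist, sum_const, card_univ,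
    nsmul_eq_mul, mul_one]

theorem exists_injective_sign_code {ι : Type*} [Fintype ι] {r : ℕ}
    (h : Fintype.card ι ≤ 2 ^ r) :
    ∃ c : ι → Fin r → ℝ, (∀ i t, c i t = 1 ∨ c i t = -1) ∧ Injective c := by
  obtain ⟨f⟩ : Nonempty (ι ↪ (Fin r → Fin 2)) :=
    Function.Embedding.nonempty_of_card_le (by simpa using h)
  have hsign : Injective ![(1 : ℝ), -1] := by
    simp only [Injective, Fin.forall_fin_two]
    norm_num
  refine ⟨fun i => ![1, -1] ∘ f i, fun i t => ?_, hsign.comp_left.comp f.injective⟩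
  simp only [comp_apply]
  generalize f i t = a
  fin_cases a <;> simp

theorem card_sub_one_mul_le_of_inner_le {E ι : Type*} [NormedAddCommGroup E]
    [InnerProductSpace ℝ E] [Fintype ι] [Nonempty ι] (w : ι → E) {c s : ℝ}
    (hself : ∀ i, inner ℝ (w i) (w i) ≤ s) (hne : ∀ i j, i ≠ j → inner ℝ (w i) (w j) ≤ -c) :
    (Fintype.card ι - 1) * c ≤ s := by
  classical
  have hrow : ∀ i, ∑ j, inner ℝ (w i) (w j) ≤ s - (Fintype.card ι - 1) * c := by
    intro i
    rw [← add_sum_erase _ _ (mem_univ i)]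
    have hrest := sum_le_card_nsmul (univ.erase i) (fun j => inner ℝ (w i) (w j)) (-c)
      fun j hj => hne i j (ne_of_mem_erase hj).symm
    rw [card_erase_of_mem (mem_univ i), card_univ, nsmul_eq_mul,
      Nat.cast_pred Fintype.card_pos] at hrest
    linarith [hself i]
  have hpos : (0 : ℝ) < Fintype.card ι := Nat.cast_pos.mpr Fintype.card_pos
  have : 0 ≤ (Fintype.card ι : ℝ) * (s - (Fintype.card ι - 1) * c) := calc
    0 ≤ inner ℝ (∑ i, w i) (∑ j, w j) := real_inner_self_nonneg
    _ = ∑ i, ∑ j, inner ℝ (w i) (w j) := by simp_rw [sum_inner, inner_sum]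
    _ ≤ ∑ _i : ι, (s - (Fintype.card ι - 1) * c) := sum_le_sum fun i _ => hrow i
    _ = _ := by rw [sum_const, card_univ, nsmul_eq_mul]
  linarith [(mul_nonneg_iff_of_pos_left hpos).mp this]

theorem card_le_succ_of_hammingDist_le {κ τ : Type*} [Fintype κ] [Fintype τ]
    {p q : κ → τ → ℝ} (hp : ∀ l t, p l t = 1 ∨ p l t = -1) (hq : ∀ l t, q l t = 1 ∨ q l t = -1)
    {a : ℕ} (hpq : ∀ l l', hammingDist (p l) (q l') ≤ a)
    (hpp : ∀ l l', l ≠ l' → a < hammingDist (p l) (p l'))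
    (hqq : ∀ l l', l ≠ l' → a < hammingDist (q l) (q l')) :
    Fintype.card κ ≤ a + 1 := by
  cases isEmpty_or_nonempty κ
  · simp
  let w : κ → EuclideanSpace ℝ τ := fun l => WithLp.toLp 2 (p l - q l)
  have hw : ∀ l l', inner ℝ (w l) (w l') = 2 * ((hammingDist (p l) (q l') : ℝ)
      + hammingDist (p l') (q l) - hammingDist (p l) (p l') - hammingDist (q l) (q l')) := by
    intro l l'
    simp only [w, EuclideanSpace.inner_toLp_toLp, dotProduct, Pi.sub_apply, star_trivial,
      sub_mul, mul_sub, sum_sub_distrib]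
    rw [sum_mul_eq_card_sub_two_mul_hammingDist (hp l') (hp l),
      sum_mul_eq_card_sub_two_mul_hammingDist (hp l') (hq l),
      sum_mul_eq_card_sub_two_mul_hammingDist (hq l') (hp l),
      sum_mul_eq_card_sub_two_mul_hammingDist (hq l') (hq l), hammingDist_comm (p l') (p l),
      hammingDist_comm (q l') (q l), hammingDist_comm (q l') (p l)]
    ring
  have hcard := card_sub_one_mul_le_of_inner_le w (c := 4) (s := 4 * a)
    (fun l => by
      have : (hammingDist (p l) (q l) : ℝ) ≤ a := by exact_mod_cast hpq l l
      rw [hw, hammingDist_self, hammingDist_self]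
      linarith)
    (fun l l' hne => by
      have h₁ : (hammingDist (p l) (q l') : ℝ) ≤ a := by exact_mod_cast hpq l l'
      have h₂ : (hammingDist (p l') (q l) : ℝ) ≤ a := by exact_mod_cast hpq l' l
      have h₃ : (a : ℝ) + 1 ≤ hammingDist (p l) (p l') := by exact_mod_cast hpp l l' hne
      have h₄ : (a : ℝ) + 1 ≤ hammingDist (q l) (q l') := by exact_mod_cast hqq l l' hne
      rw [hw]
      linarith)
  have : (Fintype.card κ : ℝ) ≤ a + 1 := by linarith
  exact_mod_cast this

theorem card_le_of_realizes_clusterSim {κ τ : Type*} [Fintype κ] [Fintype τ] [Nonempty τ]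
    {u : Bool × κ → τ → ℝ} (hu : ∀ p t, u p t = 1 ∨ u p t = -1) {θ : ℝ}
    (h : Realizes (ClusterSim Prod.fst) u u θ) : Fintype.card κ ≤ Fintype.card τ := by
  rcases le_or_gt (Fintype.card κ) 1 with hκ | hκ
  · exact hκ.trans Fintype.card_pos
  obtain ⟨l₀⟩ : Nonempty κ := Fintype.card_pos_iff.mp (by omega)
  obtain ⟨l₁, hl⟩ := Fintype.exists_ne_of_one_lt_card hκ l₀
  have hlt : ∀ l l' b m m', m ≠ m' →
      hammingDist (u (true, l)) (u (false, l')) < hammingDist (u (b, m)) (u (b, m')) := by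
    intro l l' b m m' hm
    have hcross := (h (true, l) (false, l')).1 (Or.inr (by simp))
    have hwithin := (h (b, m) (b, m')).2 (by simp [ClusterSim, hm])
    rw [sum_mul_eq_card_sub_two_mul_hammingDist (hu _) (hu _)] at hcross hwithin
    exact_mod_cast (by linarith : (hammingDist (u (true, l)) (u (false, l')) : ℝ) <
      hammingDist (u (b, m)) (u (b, m')))
  obtain ⟨⟨l, l'⟩, -, hmax⟩ := exists_max_image univ
    (fun x : κ × κ => hammingDist (u (true, x.1)) (u (false, x.2))) ⟨(l₀, l₀), mem_univ _⟩
  calc Fintype.card κ ≤ hammingDist (u (true, l)) (u (false, l')) + 1 :=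
        card_le_succ_of_hammingDist_le (fun _ => hu _) (fun _ => hu _)
          (fun m m' => hmax (m, m') (mem_univ _)) (hlt l l' true) (hlt l l' false)
    _ ≤ hammingDist (u (true, l₁)) (u (true, l₀)) := hlt l l' true l₁ l₀ hl
    _ ≤ Fintype.card τ := hammingDist_le_card_fintype

theorem exists_realizes_clusterSim {ι τ : Type*} [Fintype τ] (g : ι → Bool) {c : ι → τ → ℝ}
    (hc : ∀ i t, c i t = 1 ∨ c i t = -1) (hinj : Injective c) :
    ∃ u v : ι → τ ⊕ τ → ℝ, (∀ i t, u i t = 1 ∨ u i t = -1) ∧ (∀ i t, v i t = 1 ∨ v i t = -1) ∧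
      Realizes (ClusterSim g) u v (-1) := by
  refine ⟨fun i => Sum.elim (c i) fun _ => if g i then 1 else -1,
    fun j => Sum.elim (c j) fun _ => if g j then -1 else 1, ?_, ?_, fun i j => ?_⟩
  · rintro i (t | t)
    exacts [hc i t, by simp only [Sum.elim_inr]; split <;> simp]
  · rintro j (t | t)
    exacts [hc j t, by simp only [Sum.elim_inr]; split <;> simp]
  dsimp only
  have hsum : ∑ t : τ ⊕ τ, Sum.elim (c i) (fun _ => if g i then 1 else -1) t *
      Sum.elim (c j) (fun _ => if g j then -1 else 1) t =
      (Fintype.card τ - 2 * hammingDist (c i) (c j)) +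
        Fintype.card τ * (if g i = g j then -1 else 1) := by
    rw [Fintype.sum_sum_type]
    simp only [Sum.elim_inl, Sum.elim_inr, sum_mul_eq_card_sub_two_mul_hammingDist (hc i) (hc j),
      sum_const, card_univ, nsmul_eq_mul]
    cases g i <;> cases g j <;> simp
  have hD : (hammingDist (c i) (c j) : ℝ) ≤ Fintype.card τ := by
    exact_mod_cast hammingDist_le_card_fintype
  rw [hsum]
  rcases eq_or_ne i j with rfl | hij
  · simp [ClusterSim]
  by_cases hg : g i = g j
  · have hD₁ : (1 : ℝ) ≤ hammingDist (c i) (c j) := by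
      exact_mod_cast hammingDist_pos.mpr (hinj.ne hij)
    have hns : ¬ ClusterSim g i j := by simp [ClusterSim, hij, hg]
    rw [if_pos hg]
    exact ⟨fun hs => absurd hs hns, fun _ => by linarith⟩
  · rw [if_neg hg]
    exact ⟨fun _ => by linarith, fun hns => absurd (Or.inr hg) hns⟩

section ClusterPoint

variable {κ : Type*} [Fintype κ] [DecidableEq κ]

noncomputable def simplexVertex (l t : κ) : ℝ :=
  (if t = l then 1 else 0) - (Fintype.card κ : ℝ)⁻¹

theorem sum_simplexVertex_mul (l m : κ) :
    ∑ t, simplexVertex l t * simplexVertex m t =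
      (if l = m then 1 else 0) - (Fintype.card κ : ℝ)⁻¹ := by
  have : Nonempty κ := ⟨l⟩
  have hM : (Fintype.card κ : ℝ) ≠ 0 := Nat.cast_ne_zero.mpr Fintype.card_ne_zero
  simp only [simplexVertex, sub_mul, mul_sub, ite_mul, mul_ite, one_mul, zero_mul, mul_one,
    mul_zero, sum_sub_distrib, sum_ite_eq', mem_univ, if_true, sum_const, card_univ,
    nsmul_eq_mul]
  rcases eq_or_ne l m with rfl | h
  · simp only [if_true]
    field_simp
    ring
  · simp only [h, h.symm, if_false]
    field_simp
    ring

noncomputable def clusterPoint (p : Bool × κ) : EuclideanSpace ℝ (Bool × κ) :=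
  WithLp.toLp 2 fun q => if q.1 = p.1 then simplexVertex p.2 q.2 else 0

theorem inner_clusterPoint (p q : Bool × κ) :
    inner ℝ (clusterPoint p) (clusterPoint q) =
      if p.1 = q.1 then (if p.2 = q.2 then 1 else 0) - (Fintype.card κ : ℝ)⁻¹ else 0 := by
  simp only [clusterPoint, EuclideanSpace.inner_toLp_toLp, dotProduct, star_trivial,
    Fintype.sum_prod_type, ite_mul, mul_ite, zero_mul, mul_zero]
  obtain ⟨b, l⟩ := p
  obtain ⟨b', l'⟩ := q
  rw [Fintype.sum_bool]
  cases b <;> cases b' <;> simp [sum_simplexVertex_mul, eq_comm]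

theorem norm_clusterPoint_sub_sq (p q : Bool × κ) :
    ‖clusterPoint p - clusterPoint q‖ ^ 2 =
      if p = q then 0 else if p.1 = q.1 then 2 else 2 - 2 * (Fintype.card κ : ℝ)⁻¹ := by
  rw [norm_sub_sq_real, ← real_inner_self_eq_norm_sq, ← real_inner_self_eq_norm_sq,
    inner_clusterPoint, inner_clusterPoint, inner_clusterPoint]
  obtain ⟨b, l⟩ := p
  obtain ⟨b', l'⟩ := q
  by_cases hb : b = b' <;> by_cases hl : l = l' <;> simp [hb, hl] <;> ring

end ClusterPoint

theorem exists_norm_sub_le_one_iff_clusterSim (κ : Type*) [Fintype κ] :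
    ∃ (d : ℕ) (x : Bool × κ → EuclideanSpace ℝ (Fin d)),
      ∀ p q, ‖x p - x q‖ ≤ 1 ↔ ClusterSim Prod.fst p q := by
  classical
  set M : ℝ := (Fintype.card κ : ℝ)
  -- squared distances become `(M + 1) / M > 1` within a cluster and `1 - 1 / M ^ 2` across
  refine ⟨Fintype.card (Bool × κ), fun p => LinearIsometryEquiv.piLpCongrLeft 2 ℝ ℝ
    (Fintype.equivFin _) (√((M + 1) / (2 * M)) • clusterPoint p), fun p q => ?_⟩
  have : Nonempty κ := ⟨p.2⟩
  have hM : 1 ≤ M := Nat.one_le_cast.mpr Fintype.card_pos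
  rw [← map_sub, LinearIsometryEquiv.norm_map, ← smul_sub, ← sq_le_one_iff₀ (norm_nonneg _),
    norm_smul, mul_pow, Real.norm_eq_abs, sq_abs, Real.sq_sqrt (by positivity),
    norm_clusterPoint_sub_sq]
  unfold ClusterSim
  split_ifs with hpq hfst
  · simp [hpq]
  · simp only [hpq, hfst, ne_eq, not_true_eq_false, or_self, iff_false, not_le]
    rw [div_mul_eq_mul_div, one_lt_div (by positivity)]
    linarith
  · simp only [hpq, hfst, ne_eq, not_false_eq_true, or_true, iff_true]
    field_simp
    nlinarith

/-- For every positive integer `r` there exists a set of `n = 2^r` points in a Euclidean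
space such that the thresholded Euclidean similarity matrix `S` (with `S i j = 1` iff
`‖x i - x j‖ ≤ 1` and `-1` otherwise) admits an asymmetric binary code of length `2r`,
while every symmetric binary code for `S` must have length at least `2^r / 2`. -/
theorem asymmetric_vs_symmetric_code_gap (r : ℕ) (hr : 0 < r) :
    ∃ (d : ℕ) (x : Fin (2 ^ r) → EuclideanSpace ℝ (Fin d))
      (S : Fin (2 ^ r) → Fin (2 ^ r) → ℝ),
      (∀ i j, S i j = if ‖x i - x j‖ ≤ 1 then 1 else -1) ∧
      (∃ (u v : Fin (2 ^ r) → Fin (2 * r) → ℝ) (θ : ℝ),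
        (∀ i t, u i t = 1 ∨ u i t = -1) ∧
        (∀ i t, v i t = 1 ∨ v i t = -1) ∧
        (∀ i j, 0 < S i j * ((∑ t, u i t * v j t) - θ))) ∧
      (∀ (k : ℕ), 0 < k → ∀ (u : Fin (2 ^ r) → Fin k → ℝ) (θ : ℝ),
        (∀ i t, u i t = 1 ∨ u i t = -1) →
        (∀ i j, 0 < S i j * ((∑ t, u i t * u j t) - θ)) →
        ((2 ^ r : ℝ) / 2) ≤ (k : ℝ)) := by
  obtain ⟨M, hM⟩ : ∃ M, 2 ^ r = 2 * M := ⟨2 ^ (r - 1), by rw [← pow_succ']; congr 1; omega⟩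
  let e : Fin (2 ^ r) ≃ Bool × Fin M := Fintype.equivOfCardEq (by simp [hM])
  obtain ⟨d, x, hx⟩ := exists_norm_sub_le_one_iff_clusterSim (Fin M)
  have hsim : (fun i j => ‖x (e i) - x (e j)‖ ≤ 1) =
      fun i j => ClusterSim Prod.fst (e i) (e j) := by
    ext i j
    exact hx _ _
  refine ⟨d, fun i => x (e i), _, fun _ _ => rfl, ?_, ?_⟩
  · obtain ⟨c, hc, hinj⟩ := exists_injective_sign_code (ι := Bool × Fin M) (r := r)
      (by simp [← hM])
    obtain ⟨u, v, hu, hv, huv⟩ := exists_realizes_clusterSim Prod.fst hc hinj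
    let f : Fin (2 * r) ≃ Fin r ⊕ Fin r := (finCongr (two_mul r)).trans finSumFinEquiv.symm
    refine ⟨fun i => u (e i) ∘ f, fun j => v (e j) ∘ f, -1, fun i t => hu _ _, fun j t => hv _ _,
      (realizes_iff_forall_pos (P := fun i j => ‖x (e i) - x (e j)‖ ≤ 1)).mp ?_⟩
    rw [hsim]
    exact (huv.comp e).reindex f
  · intro k hk u θ hu hsep
    have : Nonempty (Fin k) := Fin.pos_iff_nonempty.mp hk
    have h := (realizes_iff_forall_pos (P := fun i j => ‖x (e i) - x (e j)‖ ≤ 1)).mpr hsep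
    rw [hsim] at h
    have hMk : M ≤ k := by
      simpa using card_le_of_realizes_clusterSim (fun p => hu (e.symm p))
        (by simpa using h.comp e.symm)
    have h2M : (2 ^ r : ℝ) = 2 * M := by exact_mod_cast hM
    rw [h2M]
    linarith [(Nat.cast_le (α := ℝ)).mpr hMk]
end

section
/- Let n = 2m be an even positive integer and let G ∈ ℝ^{n×n} be the matrix defined by G_ii = 1/2 for all i, and for i ≠ j, G_ij = −1/(2n) if i and j both lie in {1,...,m} or both lie in {m+1,...,n}, and G_ij = 1/(2n) otherwise. Then there exist vectors x_1, ..., x_n ∈ ℝ^n such that ⟨x_i, x_j⟩ = G_ij for all 1 ≤ i, j ≤ n. -/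
/-- There exist vectors `x 1, ..., x n ∈ ℝ^n` whose Gram matrix (of standard Euclidean
inner products) equals the matrix `G` with `G i i = 1/2`, `G i j = -1/(2n)` when
`i ≠ j` lie in the same half of the index set, and `G i j = 1/(2n)` otherwise,
where `n = 2m`. -/
theorem exists_gram_realization (m : ℕ) (hm : 0 < m)
    (G : Fin (2 * m) → Fin (2 * m) → ℝ)
    (hG : ∀ i j, G i j =
      if i = j then 1 / 2
      else if ((i : ℕ) < m ↔ (j : ℕ) < m) then -(1 / (2 * (2 * m : ℝ)))
      else 1 / (2 * (2 * m : ℝ))) :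
    ∃ x : Fin (2 * m) → Fin (2 * m) → ℝ,
      ∀ i j, (∑ t, x i t * x j t) = G i j := by
  set n : ℝ := ((2 * m : ℕ) : ℝ) with hn
  have hnpos : (0:ℝ) < n := by
    have h : 0 < 2 * m := by omega
    rw [hn]; exact_mod_cast h
  set a : ℝ := Real.sqrt (1/2 + 1/(2*n)) with ha
  set r : ℝ := Real.sqrt (1/(2*n)) with hr
  set b : ℝ := (r - a) / n with hb
  have ha2 : a^2 = 1/2 + 1/(2*n) := by
    rw [ha, Real.sq_sqrt]; positivity
  have hr2 : r^2 = 1/(2*n) := by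
    rw [hr, Real.sq_sqrt]; positivity
  have hkey : n * b^2 + 2 * a * b = -(1/(2*n)) := by
    have : n * b^2 + 2 * a * b = (r^2 - a^2)/n := by
      rw [hb]; field_simp; ring
    rw [this, hr2, ha2]; field_simp; ring
  set s : Fin (2*m) → ℝ := fun t => if (t:ℕ) < m then 1 else -1 with hs
  have hs2 : ∀ t, s t * s t = 1 := by
    intro t; rw [hs]; dsimp only; split <;> norm_num
  refine ⟨fun i t => a * (if i = t then 1 else 0) + b * s i * s t, ?_⟩
  intro i j
  have expand : ∀ t : Fin (2*m),
      (a * (if i = t then (1:ℝ) else 0) + b * s i * s t) *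
        (a * (if j = t then 1 else 0) + b * s j * s t) =
      a^2 * ((if i = t then 1 else 0) * (if j = t then 1 else 0)) +
      a*b*s j * (if i = t then s t else 0) +
      a*b*s i * (if j = t then s t else 0) +
      b^2 * (s i * s j) * (s t * s t) := by
    intro t; split <;> split <;> ring
  rw [Finset.sum_congr rfl (fun t _ => expand t)]
  have h1 : ∑ t : Fin (2*m), ((if i = t then (1:ℝ) else 0) * (if j = t then 1 else 0))
      = if i = j then 1 else 0 := by
    simp only [mul_ite, mul_one, mul_zero, Finset.sum_ite_eq, Finset.mem_univ, if_true]
  have h2 : ∑ t : Fin (2*m), (if i = t then s t else 0) = s i := by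
    simp [Finset.sum_ite_eq]
  have h3 : ∑ t : Fin (2*m), (if j = t then s t else 0) = s j := by
    simp [Finset.sum_ite_eq]
  have h4 : ∑ t : Fin (2*m), (s t * s t) = n := by
    simp only [hs2]
    simp [hn]
  simp only [Finset.sum_add_distrib, ← Finset.mul_sum, h1, h2, h3, h4]
  rw [hG]
  simp only [show (2 * (2 * (m:ℝ))) = 2 * n by rw [hn]; push_cast; ring]
  have hsij : s i * s j = if ((i : ℕ) < m ↔ (j : ℕ) < m) then 1 else -1 := by
    rw [hs]; dsimp only
    by_cases hi : (i:ℕ) < m <;> by_cases hj : (j:ℕ) < m <;> simp [hi, hj]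
  by_cases hij : i = j
  · subst hij
    rw [if_pos rfl, if_pos rfl]
    have e : s i * s i = 1 := hs2 i
    linear_combination (s i * s i) * hkey + ha2 + (-(1/(2*n))) * e
  · rw [if_neg hij, if_neg hij]
    by_cases hh : ((i : ℕ) < m ↔ (j : ℕ) < m)
    · rw [if_pos hh]
      have e : s i * s j = 1 := by rw [hsij, if_pos hh]
      linear_combination (s i * s j) * hkey + (-(1/(2*n))) * e
    · rw [if_neg hh]
      have e : s i * s j = -1 := by rw [hsij, if_neg hh]
      linear_combination (s i * s j) * hkey + (-(1/(2*n))) * e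
end

section
/- Let r be a positive integer, n = 2^r, and m = n/2. Let b_1, ..., b_n be an enumeration (in any order, without repetition) of all vertices of the cube {±1}^r, and for each i let σ_i = 1 if i ∈ {1,...,m} and σ_i = −1 if i ∈ {m+1,...,n}. Define codewords u_i, v_i ∈ {±1}^{2r} by u_i = (b_i, σ_i·𝟙_r) and v_i = (b_i, −σ_i·𝟙_r), where 𝟙_r is the all-ones vector in ℝ^r. Let S ∈ {±1}^{n×n} be the block similarity matrix: S_ij = 1 if i = j or exactly one of i, j lies in {1,...,m}, and S_ij = −1 otherwise. Then, with θ = −1 and Y_ij = ⟨u_i, v_j⟩ − θ, one has Y_ij ≥ 1 whenever S_ij = 1 and Y_ij ≤ −1 whenever S_ij = −1; in particular S_ij·(⟨u_i, v_j⟩ − θ) > 0 for all i, j, so S admits an asymmetric binary code of length 2r. -/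
lemma pm_sum_ub {r : ℕ} (c d : Fin r → ℝ) (hc : ∀ t, c t = 1 ∨ c t = -1)
    (hd : ∀ t, d t = 1 ∨ d t = -1) : ∑ t, c t * d t ≤ r := by
  calc ∑ t, c t * d t ≤ ∑ _t : Fin r, (1 : ℝ) := by
        apply Finset.sum_le_sum
        intro t _
        rcases hc t with h1 | h1 <;> rcases hd t with h2 | h2 <;> simp [h1, h2]
    _ = r := by simp

lemma pm_sum_lb {r : ℕ} (c d : Fin r → ℝ) (hc : ∀ t, c t = 1 ∨ c t = -1)
    (hd : ∀ t, d t = 1 ∨ d t = -1) : -(r : ℝ) ≤ ∑ t, c t * d t := by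
  have h : ∑ _t : Fin r, (-1 : ℝ) ≤ ∑ t, c t * d t := by
    apply Finset.sum_le_sum
    intro t _
    rcases hc t with h1 | h1 <;> rcases hd t with h2 | h2 <;> simp [h1, h2]
  simpa using h

lemma pm_sum_ne {r : ℕ} (c d : Fin r → ℝ) (hc : ∀ t, c t = 1 ∨ c t = -1)
    (hd : ∀ t, d t = 1 ∨ d t = -1) (hne : c ≠ d) : ∑ t, c t * d t ≤ (r : ℝ) - 2 := by
  obtain ⟨t0, ht0⟩ : ∃ t, c t ≠ d t := by
    by_contra h
    push_neg at h
    exact hne (funext h)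
  have h0 : c t0 * d t0 = -1 := by
    rcases hc t0 with h1 | h1 <;> rcases hd t0 with h2 | h2 <;> simp_all
  have := Finset.add_sum_erase Finset.univ (fun t => c t * d t) (Finset.mem_univ t0)
  rw [← this, h0]
  have : ∑ t ∈ Finset.univ.erase t0, c t * d t ≤ ∑ _t ∈ Finset.univ.erase t0, (1:ℝ) := by
    apply Finset.sum_le_sum
    intro t _
    rcases hc t with h1 | h1 <;> rcases hd t with h2 | h2 <;> simp [h1, h2]
  have hcard : (Finset.univ.erase t0).card = r - 1 := by
    rw [Finset.card_erase_of_mem (Finset.mem_univ t0)]; simp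
  have hr : 1 ≤ r := t0.pos
  rw [Finset.sum_const, hcard, nsmul_eq_mul, mul_one, Nat.cast_sub hr] at this
  push_cast at this ⊢
  linarith

/-- With `n = 2^r`, `m = n/2`, an enumeration `b` of the vertices of `{±1}^r`, signs
`σ i = 1` for `i` in the first half and `-1` in the second half, codewords
`u i = (b i, σ i·𝟙)` and `v i = (b i, -σ i·𝟙)` in `{±1}^{2r}`, and threshold `θ = -1`,
one has `Y i j = ⟨u i, v j⟩ - θ ≥ 1` when `S i j = 1` and `Y i j ≤ -1` when
`S i j = -1`; in particular `S i j * (⟨u i, v j⟩ - θ) > 0` for all `i, j`, so the block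
similarity matrix `S` admits an asymmetric binary code of length `2r`. -/
theorem asymmetric_code_construction (r : ℕ) (hr : 0 < r)
    (b : Fin (2 ^ r) → Fin r → ℝ)
    (hb1 : ∀ i t, b i t = 1 ∨ b i t = -1)
    (hb2 : Function.Injective b)
    (hb3 : ∀ c : Fin r → ℝ, (∀ t, c t = 1 ∨ c t = -1) → ∃ i, b i = c) :
    let m : ℕ := 2 ^ r / 2
    let σ : Fin (2 ^ r) → ℝ := fun i => if (i : ℕ) < m then 1 else -1
    let u : Fin (2 ^ r) → Fin (r + r) → ℝ := fun i => Fin.append (b i) (fun _ => σ i)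
    let v : Fin (2 ^ r) → Fin (r + r) → ℝ := fun i => Fin.append (b i) (fun _ => -σ i)
    let S : Fin (2 ^ r) → Fin (2 ^ r) → ℝ := fun i j =>
      if i = j ∨ ¬((i : ℕ) < m ↔ (j : ℕ) < m) then 1 else -1
    let θ : ℝ := -1
    ∀ i j, (S i j = 1 → 1 ≤ (∑ t, u i t * v j t) - θ) ∧
      (S i j = -1 → (∑ t, u i t * v j t) - θ ≤ -1) ∧
      0 < S i j * ((∑ t, u i t * v j t) - θ) := by
  intro m σ u v S θ i j
  have key : (∑ t, u i t * v j t) = (∑ t : Fin r, b i t * b j t) - (r : ℝ) * (σ i * σ j) := by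
    simp only [u, v, Fin.sum_univ_add, Fin.append_left, Fin.append_right]
    rw [Finset.sum_const]
    simp
    ring
  have hY : ∀ (P : Prop) [Decidable P], True := fun _ _ => trivial
  -- case analysis on sign agreement and equality
  by_cases hij : i = j
  · -- diagonal: S = 1, inner product = r - r = 0, Y = 1
    subst hij
    have hσ : σ i * σ i = 1 := by simp only [σ]; split <;> norm_num
    have hbb : (∑ t : Fin r, b i t * b i t) = r := by
      have : ∀ t : Fin r, b i t * b i t = 1 := by
        intro t; rcases hb1 i t with h | h <;> simp [h]
      simp [this]
    have hS : S i i = 1 := by simp [S]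
    rw [key, hbb, hσ] at *
    refine ⟨fun _ => by simp [θ], fun h => by rw [hS] at h; norm_num at h, ?_⟩
    rw [hS]; simp [θ]
  · by_cases hmm : ((i : ℕ) < m ↔ (j : ℕ) < m)
    · -- same half, i ≠ j: S = -1, σ i * σ j = 1, inner ≤ r - 2 - r = -2
      have hσ : σ i * σ j = 1 := by
        simp only [σ]
        rcases hmm with ⟨h1, h2⟩
        by_cases h : (i : ℕ) < m
        · simp [h, h1 h]
        · have : ¬ (j:ℕ) < m := fun hj => h (h2 hj)
          simp [h, this]
      have hS : S i j = -1 := by simp [S, hij, hmm]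
      have hne : b i ≠ b j := fun h => hij (hb2 h)
      have hub := pm_sum_ne (b i) (b j) (hb1 i) (hb1 j) hne
      rw [key, hσ] at *
      refine ⟨fun h => by rw [hS] at h; norm_num at h, fun _ => by simp only [θ]; linarith,
        ?_⟩
      rw [hS]; simp only [θ]; nlinarith
    · -- different halves: S = 1, σ i * σ j = -1, inner ≥ -r + r = 0, Y ≥ 1
      have hσ : σ i * σ j = -1 := by
        simp only [σ]
        by_cases h : (i : ℕ) < m
        · have : ¬ (j:ℕ) < m := fun hj => hmm ⟨fun _ => hj, fun _ => h⟩
          simp [h, this]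
        · have : (j:ℕ) < m := by
            by_contra hj
            exact hmm ⟨fun hi => absurd hi h, fun hj' => absurd hj' hj⟩
          simp [h, this]
      have hS : S i j = 1 := by simp [S, hmm]
      have hlb := pm_sum_lb (b i) (b j) (hb1 i) (hb1 j)
      rw [key, hσ] at *
      refine ⟨fun _ => by simp only [θ]; linarith, fun h => by rw [hS] at h; norm_num at h, ?_⟩
      rw [hS]; simp only [θ]; nlinarith
end

section
/- Let n = 2m be an even positive integer and let S ∈ {±1}^{n×n} be the block similarity matrix: S_ij = 1 if i = j or exactly one of i, j lies in {1,...,m}, and S_ij = −1 otherwise. Then for every positive integer k, every collection of codewords u_1, ..., u_n ∈ {±1}^k, and every θ ∈ ℝ such that S_ij·(⟨u_i, u_j⟩ − θ) > 0 for all 1 ≤ i, j ≤ n, one has k ≥ n/2. -/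
/-- Double-sum swap for inner products of sums. -/
lemma sum_mul_swap' {k N M : ℕ} (f : Fin N → Fin k → ℝ) (g : Fin M → Fin k → ℝ) :
    ∑ t, (∑ i, f i t) * (∑ j, g j t) = ∑ i, ∑ j, ∑ t, f i t * g j t := by
  simp_rw [Finset.sum_mul_sum]
  rw [Finset.sum_comm]
  exact Finset.sum_congr rfl fun i _ => Finset.sum_comm

/-- A family of vectors with pairwise negative inner products, all of which also have
negative inner product with a fixed vector `x0`, is linearly independent. -/
lemma neg_inner_linearIndependent {k N : ℕ} (w : Fin N → Fin k → ℝ) (x0 : Fin k → ℝ)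
    (h0 : ∀ i, (∑ t, w i t * x0 t) < 0)
    (hpair : ∀ i j, i ≠ j → (∑ t, w i t * w j t) < 0) :
    LinearIndependent ℝ w := by
  rw [Fintype.linearIndependent_iff]
  intro c hc
  set p : Fin N → ℝ := fun i => max (c i) 0 with hp
  set q : Fin N → ℝ := fun i => max (-c i) 0 with hq
  have hpq : ∀ i, c i = p i - q i := by
    intro i
    rcases le_total 0 (c i) with hh | hh
    · simp [hp, hq, max_eq_left hh, max_eq_right (neg_nonpos.mpr hh)]
    · simp [hp, hq, max_eq_right hh, max_eq_left (neg_nonneg.mpr hh)]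
  have hpnn : ∀ i, 0 ≤ p i := fun i => le_max_right _ _
  have hqnn : ∀ i, 0 ≤ q i := fun i => le_max_right _ _
  have hpqmul : ∀ i, p i * q i = 0 := by
    intro i
    rcases le_total 0 (c i) with hh | hh
    · simp [hq, max_eq_right (neg_nonpos.mpr hh)]
    · simp [hp, max_eq_right hh]
  have hct : ∀ t, ∑ i, c i * w i t = 0 := by
    intro t
    have := congrFun hc t
    simpa [Finset.sum_apply] using this
  have hZ : ∀ t, (∑ i, p i * w i t) = (∑ i, q i * w i t) := by
    intro t
    have h1 : ∑ i, (p i * w i t - q i * w i t) = 0 := by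
      rw [← hct t]
      exact Finset.sum_congr rfl fun i _ => by rw [hpq i]; ring
    rw [Finset.sum_sub_distrib] at h1
    linarith
  -- the key quadratic quantity
  have hS1 : ∑ t, (∑ i, p i * w i t) * (∑ j, q j * w j t)
      = ∑ i, ∑ j, p i * q j * (∑ t, w i t * w j t) := by
    rw [sum_mul_swap' (fun i t => p i * w i t) (fun j t => q j * w j t)]
    refine Finset.sum_congr rfl fun i _ => Finset.sum_congr rfl fun j _ => ?_
    rw [Finset.mul_sum]
    exact Finset.sum_congr rfl fun t _ => by ring
  have hS1nonpos : ∑ t, (∑ i, p i * w i t) * (∑ j, q j * w j t) ≤ 0 := by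
    rw [hS1]
    apply Finset.sum_nonpos
    intro i _
    apply Finset.sum_nonpos
    intro j _
    by_cases hij : i = j
    · subst hij; rw [hpqmul i]; simp
    · nlinarith [hpair i j hij, mul_nonneg (hpnn i) (hqnn j)]
  have hS1nonneg : 0 ≤ ∑ t, (∑ i, p i * w i t) * (∑ j, q j * w j t) := by
    apply Finset.sum_nonneg
    intro t _
    rw [← hZ t]
    exact mul_self_nonneg _
  have hS1zero : ∑ t, (∑ i, p i * w i t) * (∑ j, q j * w j t) = 0 :=
    le_antisymm hS1nonpos hS1nonneg
  have hZzero : ∀ t, (∑ i, p i * w i t) = 0 := by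
    have heq : ∑ t, (∑ i, p i * w i t) * (∑ i, p i * w i t) = 0 := by
      rw [← hS1zero]
      exact Finset.sum_congr rfl fun t _ => by rw [← hZ t]
    intro t
    have := (Finset.sum_eq_zero_iff_of_nonneg
      (fun s _ => mul_self_nonneg (∑ i, p i * w i s))).mp heq t (Finset.mem_univ t)
    exact mul_self_eq_zero.mp this
  have hZzero' : ∀ t, (∑ i, q i * w i t) = 0 := fun t => by rw [← hZ t]; exact hZzero t
  -- pair against x0
  have key : ∀ (r : Fin N → ℝ), (∀ t, (∑ i, r i * w i t) = 0) → (∀ i, 0 ≤ r i) →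
      ∀ i, r i = 0 := by
    intro r hr hrnn i
    have hsum : ∑ j, r j * (∑ t, w j t * x0 t) = 0 := by
      have h2 : ∑ t, (∑ i, r i * w i t) * x0 t = 0 :=
        Finset.sum_eq_zero fun t _ => by rw [hr t]; ring
      have h3 : ∑ t, (∑ i, r i * w i t) * x0 t = ∑ j, r j * (∑ t, w j t * x0 t) := by
        simp_rw [Finset.sum_mul]
        rw [Finset.sum_comm]
        refine Finset.sum_congr rfl fun j _ => ?_
        rw [Finset.mul_sum]
        exact Finset.sum_congr rfl fun t _ => by ring
      rw [← h3]
      exact h2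
    have hterm : ∀ j ∈ Finset.univ, r j * (∑ t, w j t * x0 t) ≤ 0 :=
      fun j _ => mul_nonpos_of_nonneg_of_nonpos (hrnn j) (le_of_lt (h0 j))
    have hterm0 := (Finset.sum_eq_zero_iff_of_nonpos hterm).mp hsum i (Finset.mem_univ i)
    rcases mul_eq_zero.mp hterm0 with h' | h'
    · exact h'
    · exact absurd h' (ne_of_lt (h0 i))
  intro i
  have hp0 := key p (fun t => hZzero t) hpnn i
  have hq0 := key q (fun t => hZzero' t) hqnn i
  rw [hpq i, hp0, hq0]
  ring

/-- Every symmetric binary code realizing the block similarity matrix `S` on `n = 2m`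
points (with `S i j = 1` iff `i = j` or `i, j` lie in different halves) must have
length `k ≥ n / 2`. -/
theorem symmetric_code_lower_bound (m : ℕ) (hm : 0 < m) (k : ℕ) (hk : 0 < k)
    (u : Fin (2 * m) → Fin k → ℝ)
    (hu : ∀ i t, u i t = 1 ∨ u i t = -1)
    (S : Fin (2 * m) → Fin (2 * m) → ℝ)
    (hS : ∀ i j, S i j =
      if i = j ∨ ¬((i : ℕ) < m ↔ (j : ℕ) < m) then 1 else -1)
    (θ : ℝ)
    (h : ∀ i j, 0 < S i j * ((∑ t, u i t * u j t) - θ)) :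
    (2 * m : ℝ) / 2 ≤ (k : ℝ) := by
  by_contra hcon
  push_neg at hcon
  have hkm : k + 1 ≤ m := by
    have hmr : (k : ℝ) < (m : ℝ) := by
      have : (2 * m : ℝ) / 2 = (m : ℝ) := by push_cast; ring
      linarith [hcon, this.symm ▸ hcon]
    have : k < m := by exact_mod_cast hmr
    omega
  -- the two halves, restricted to k+1 points each
  set ea : Fin (k + 1) → Fin (2 * m) := fun i => ⟨(i : ℕ), by have := i.isLt; omega⟩ with hea
  set eb : Fin (k + 1) → Fin (2 * m) := fun i => ⟨m + (i : ℕ), by have := i.isLt; omega⟩ with heb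
  have heam : ∀ i, ((ea i : Fin (2 * m)) : ℕ) < m := fun i => by
    simp only [hea]; have := i.isLt; omega
  have hebm : ∀ i, ¬(((eb i : Fin (2 * m)) : ℕ) < m) := fun i => by
    simp only [heb]; omega
  have heane : ∀ i j : Fin (k + 1), i ≠ j → ea i ≠ ea j := by
    intro i j hij hEq
    exact hij (Fin.ext (by simpa [hea] using congrArg Fin.val hEq))
  have hebne : ∀ i j : Fin (k + 1), i ≠ j → eb i ≠ eb j := by
    intro i j hij hEq
    have := congrArg Fin.val hEq
    simp only [heb] at this
    exact hij (Fin.ext (by omega))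
  -- sign conditions
  have hlt : ∀ x y : Fin (2 * m), x ≠ y → (((x : ℕ) < m) ↔ ((y : ℕ) < m)) →
      (∑ t, u x t * u y t) < θ := by
    intro x y hxy hiff
    have hs := h x y
    rw [hS x y, if_neg (by tauto)] at hs
    nlinarith
  have hgt : ∀ x y : Fin (2 * m), ¬(((x : ℕ) < m) ↔ ((y : ℕ) < m)) →
      θ < ∑ t, u x t * u y t := by
    intro x y hiff
    have hs := h x y
    rw [hS x y, if_pos (Or.inr hiff)] at hs
    nlinarith
  have haa : ∀ i j : Fin (k + 1), i ≠ j → (∑ t, u (ea i) t * u (ea j) t) < θ :=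
    fun i j hij => hlt _ _ (heane i j hij) (by simp [heam i, heam j])
  have hbb : ∀ i j : Fin (k + 1), i ≠ j → (∑ t, u (eb i) t * u (eb j) t) < θ :=
    fun i j hij => hlt _ _ (hebne i j hij) (by simp [hebm i, hebm j])
  have hab : ∀ i j : Fin (k + 1), θ < ∑ t, u (ea i) t * u (eb j) t :=
    fun i j => hgt _ _ (by simp [heam i, hebm j])
  have hba : ∀ i j : Fin (k + 1), θ < ∑ t, u (eb i) t * u (ea j) t :=
    fun i j => hgt _ _ (by simp [hebm i, heam j])
  have hdiag : ∀ x : Fin (2 * m), (∑ t, u x t * u x t) = (k : ℝ) := by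
    intro x
    have : ∀ t, u x t * u x t = 1 := by
      intro t; rcases hu x t with h' | h' <;> rw [h'] <;> norm_num
    simp [this]
  -- integrality of inner products
  have hint : ∀ x y : Fin (2 * m), ∃ g : ℤ, ((g : ℝ) = ∑ t, u x t * u y t) ∧
      (2 : ℤ) ∣ ((k : ℤ) - g) := by
    intro x y
    refine ⟨∑ t, if u x t = u y t then 1 else -1, ?_, ?_⟩
    · push_cast
      refine Finset.sum_congr rfl fun t _ => ?_
      rcases hu x t with h1 | h1 <;> rcases hu y t with h2 | h2 <;>
        simp [h1, h2] <;> norm_num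
    · have hkz : (k : ℤ) = ∑ _t : Fin k, (1 : ℤ) := by simp
      rw [hkz, ← Finset.sum_sub_distrib]
      refine Finset.dvd_sum fun t _ => ?_
      split_ifs <;> norm_num
  rcases le_or_gt 0 θ with hθ | hθ
  · -- θ ≥ 0 : linear independence of k+1 vectors in ℝ^k
    set v : Fin (k + 1) → Fin k → ℝ := fun i t => u (ea i) t - u (eb i) t with hv
    set w : Fin (k + 1) → Fin k → ℝ :=
      fun i => if i = 0 then (fun t => -u (eb 0) t) else v i with hw
    have h0 : ∀ i, (∑ t, w i t * u (ea 0) t) < 0 := by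
      intro i
      by_cases hi : i = 0
      · subst hi
        simp only [hw, if_pos rfl]
        have := hba 0 0
        have hsum : ∑ t, -u (eb 0) t * u (ea 0) t = -(∑ t, u (eb 0) t * u (ea 0) t) := by
          rw [← Finset.sum_neg_distrib]
          exact Finset.sum_congr rfl fun t _ => by ring
        rw [hsum]
        linarith
      · simp only [hw, if_neg hi, hv]
        have h1 := haa i 0 hi
        have h2 := hba i 0
        have hsum : ∑ t, (u (ea i) t - u (eb i) t) * u (ea 0) t
            = (∑ t, u (ea i) t * u (ea 0) t) - (∑ t, u (eb i) t * u (ea 0) t) := by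
          rw [← Finset.sum_sub_distrib]
          exact Finset.sum_congr rfl fun t _ => by ring
        rw [hsum]
        linarith
    have hpair : ∀ i j, i ≠ j → (∑ t, w i t * w j t) < 0 := by
      intro i j hij
      by_cases hi : i = 0 <;> by_cases hj : j = 0
      · exact absurd (hi.trans hj.symm) hij
      · subst hi
        simp only [hw, if_pos rfl, if_neg hj, hv]
        have h1 := hab j 0
        have h2 := hbb j 0 hj
        have hsum : ∑ t, -u (eb 0) t * (u (ea j) t - u (eb j) t)
            = (∑ t, u (eb j) t * u (eb 0) t) - (∑ t, u (ea j) t * u (eb 0) t) := by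
          rw [← Finset.sum_sub_distrib]
          exact Finset.sum_congr rfl fun t _ => by ring
        rw [hsum]
        linarith
      · subst hj
        simp only [hw, if_pos rfl, if_neg hi, hv]
        have h1 := hab i 0
        have h2 := hbb i 0 hi
        have hsum : ∑ t, (u (ea i) t - u (eb i) t) * -u (eb 0) t
            = (∑ t, u (eb i) t * u (eb 0) t) - (∑ t, u (ea i) t * u (eb 0) t) := by
          rw [← Finset.sum_sub_distrib]
          exact Finset.sum_congr rfl fun t _ => by ring
        rw [hsum]
        linarith
      · simp only [hw, if_neg hi, if_neg hj, hv]
        have h1 := haa i j hij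
        have h2 := hab i j
        have h3 := hba i j
        have h4 := hbb i j hij
        have hsum : ∑ t, (u (ea i) t - u (eb i) t) * (u (ea j) t - u (eb j) t)
            = (∑ t, u (ea i) t * u (ea j) t) - (∑ t, u (ea i) t * u (eb j) t)
              - (∑ t, u (eb i) t * u (ea j) t) + (∑ t, u (eb i) t * u (eb j) t) := by
          rw [← Finset.sum_sub_distrib, ← Finset.sum_sub_distrib, ← Finset.sum_add_distrib]
          exact Finset.sum_congr rfl fun t _ => by ring
        rw [hsum]
        linarith
    have hli := neg_inner_linearIndependent w (u (ea 0)) h0 hpair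
    have hcard := hli.fintype_card_le_finrank
    rw [Module.finrank_fin_fun] at hcard
    simp at hcard
  · -- θ < 0 : integrality / parity argument
    set A : Fin k → ℝ := fun t => ∑ i : Fin (k + 1), u (ea i) t with hA
    have hAA : ∑ t, A t * A t
        = ∑ i : Fin (k + 1), ∑ j : Fin (k + 1), ∑ t, u (ea i) t * u (ea j) t :=
      sum_mul_swap' (fun i t => u (ea i) t) (fun j t => u (ea j) t)
    -- off-diagonal inner products in the first half are ≤ -1
    have hle : ∀ i j : Fin (k + 1), i ≠ j → (∑ t, u (ea i) t * u (ea j) t) ≤ -1 := by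
      intro i j hij
      obtain ⟨g, hg, _⟩ := hint (ea i) (ea j)
      have hglt : (g : ℝ) < 0 := by rw [hg]; linarith [haa i j hij]
      have : g < 0 := by exact_mod_cast hglt
      have : g ≤ -1 := by omega
      rw [← hg]
      exact_mod_cast this
    -- the key double sum
    have hE : ∑ i : Fin (k + 1), ∑ j ∈ Finset.univ.erase i,
        ((∑ t, u (ea i) t * u (ea j) t) + 1) = ∑ t, A t * A t := by
      rw [hAA]
      refine Finset.sum_congr rfl fun i _ => ?_
      have hcard : (Finset.univ.erase i).card = k := by
        rw [Finset.card_erase_of_mem (Finset.mem_univ i)]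
        simp
      calc ∑ j ∈ Finset.univ.erase i, ((∑ t, u (ea i) t * u (ea j) t) + 1)
          = (∑ j ∈ Finset.univ.erase i, ∑ t, u (ea i) t * u (ea j) t) + (k : ℝ) := by
            rw [Finset.sum_add_distrib, Finset.sum_const, hcard]
            simp
        _ = ∑ j : Fin (k + 1), ∑ t, u (ea i) t * u (ea j) t := by
            rw [← Finset.sum_erase_add Finset.univ _ (Finset.mem_univ i), hdiag (ea i)]
    have hEnonpos : ∑ i : Fin (k + 1), ∑ j ∈ Finset.univ.erase i,
        ((∑ t, u (ea i) t * u (ea j) t) + 1) ≤ 0 := by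
      refine Finset.sum_nonpos fun i _ => Finset.sum_nonpos fun j hj => ?_
      have hij : i ≠ j := (Finset.ne_of_mem_erase hj).symm
      linarith [hle i j hij]
    have hEnonneg : (0 : ℝ) ≤ ∑ i : Fin (k + 1), ∑ j ∈ Finset.univ.erase i,
        ((∑ t, u (ea i) t * u (ea j) t) + 1) := by
      rw [hE]
      exact Finset.sum_nonneg fun t _ => mul_self_nonneg _
    have hEzero : ∑ i : Fin (k + 1), ∑ j ∈ Finset.univ.erase i,
        ((∑ t, u (ea i) t * u (ea j) t) + 1) = 0 := le_antisymm hEnonpos hEnonneg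
    -- all off-diagonal products are exactly -1, and A = 0
    have hinner0 : ∀ i : Fin (k + 1), ∀ j ∈ Finset.univ.erase i,
        (∑ t, u (ea i) t * u (ea j) t) + 1 = 0 := by
      intro i hi
      have houter := (Finset.sum_eq_zero_iff_of_nonpos (fun i _ =>
        Finset.sum_nonpos fun j hj => by
          linarith [hle i j (Finset.ne_of_mem_erase hj).symm])).mp hEzero i (Finset.mem_univ i)
      exact (Finset.sum_eq_zero_iff_of_nonpos (fun j hj => by
        linarith [hle i j (Finset.ne_of_mem_erase hj).symm])).mp houter hi
    have hAzero : ∀ t, A t = 0 := by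
      have hAA0 : ∑ t, A t * A t = 0 := by rw [← hE]; exact hEzero
      intro t
      exact mul_self_eq_zero.mp ((Finset.sum_eq_zero_iff_of_nonneg
        (fun s _ => mul_self_nonneg (A s))).mp hAA0 t (Finset.mem_univ t))
    -- indices 0 and 1
    set i0 : Fin (k + 1) := ⟨0, by omega⟩ with hi0
    set j1 : Fin (k + 1) := ⟨1, by omega⟩ with hj1
    have hne01 : i0 ≠ j1 := Fin.ne_of_val_ne (by norm_num)
    have hmem : j1 ∈ Finset.univ.erase i0 :=
      Finset.mem_erase.mpr ⟨hne01.symm, Finset.mem_univ j1⟩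
    have hG01 : (∑ t, u (ea i0) t * u (ea j1) t) = -1 := by
      have := hinner0 i0 j1 hmem
      linarith
    have hθgt : (-1 : ℝ) < θ := by
      have := haa i0 j1 hne01
      linarith [hG01]
    -- cross inner products are ≥ 0
    have hcross : ∀ i j : Fin (k + 1), (0 : ℝ) ≤ ∑ t, u (ea i) t * u (eb j) t := by
      intro i j
      obtain ⟨g, hg, _⟩ := hint (ea i) (eb j)
      have : (-1 : ℝ) < (g : ℝ) := by rw [hg]; linarith [hab i j]
      have : (-1 : ℤ) < g := by exact_mod_cast this
      have : (0 : ℤ) ≤ g := by omega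
      rw [← hg]
      exact_mod_cast this
    -- but their total is 0 since A = 0
    have hAB : ∑ i : Fin (k + 1), ∑ j : Fin (k + 1),
        ∑ t, u (ea i) t * u (eb j) t = 0 := by
      rw [← sum_mul_swap' (fun i t => u (ea i) t) (fun j t => u (eb j) t)]
      refine Finset.sum_eq_zero fun t _ => ?_
      have := hAzero t
      simp only [hA] at this
      rw [this, zero_mul]
    have hG00 : (∑ t, u (ea i0) t * u (eb i0) t) = 0 := by
      have houter := (Finset.sum_eq_zero_iff_of_nonneg (fun i _ =>
        Finset.sum_nonneg fun j _ => hcross i j)).mp hAB i0 (Finset.mem_univ i0)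
      exact (Finset.sum_eq_zero_iff_of_nonneg (fun j _ =>
        hcross i0 j)).mp houter i0 (Finset.mem_univ i0)
    -- parity contradiction
    obtain ⟨g1, hg1, hd1⟩ := hint (ea i0) (ea j1)
    obtain ⟨g2, hg2, hd2⟩ := hint (ea i0) (eb i0)
    have hg1v : g1 = -1 := by
      have : (g1 : ℝ) = -1 := by rw [hg1, hG01]
      exact_mod_cast this
    have hg2v : g2 = 0 := by
      have : (g2 : ℝ) = 0 := by rw [hg2, hG00]
      exact_mod_cast this
    rw [hg1v] at hd1
    rw [hg2v] at hd2
    omega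
end

section
/- Let n = 2m be an even positive integer and k a positive integer. Let Y' ∈ ℝ^{n×n} be a symmetric positive semidefinite matrix and θ ∈ ℝ with −k + 1 ≤ θ ≤ k − 1, and suppose: Y'_ii ≤ k for all i; Y'_ij ≥ θ + 1 whenever i ≠ j and exactly one of i, j lies in {1,...,m}; and Y'_ij ≤ θ − 1 whenever i ≠ j and i, j both lie in {1,...,m} or both lie in {m+1,...,n}. Then, taking q ∈ ℝ^n with q_i = 1 for i ∈ {1,...,m} and q_i = −1 for i ∈ {m+1,...,n}, one has 0 ≤ q^T Y' q ≤ n·k + (n²/2 − n)(θ − 1) − (n²/2)(θ + 1) = n·k − n² − n(θ − 1) ≤ 2n·k − n², and consequently k ≥ n/2. -/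
lemma card_lt_half (m : ℕ) :
    (Finset.univ.filter (fun j : Fin (2*m) => (j:ℕ) < m)).card = m := by
  rw [show Finset.univ.filter (fun j : Fin (2*m) => (j:ℕ) < m)
      = (Finset.range m).attachFin (fun x hx => by simp at hx; omega) from by
    ext j; simp [Finset.mem_attachFin]]
  simp

lemma sum_if_lt (m : ℕ) (a b : ℝ) :
    ∑ j : Fin (2*m), (if (j:ℕ) < m then a else b) = m * a + m * b := by
  rw [Finset.sum_ite, Finset.sum_const, Finset.sum_const]
  have h1 := card_lt_half m
  have h2 : (Finset.univ.filter (fun j : Fin (2*m) => ¬ (j:ℕ) < m)).card = m := by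
    have := Finset.card_filter_add_card_filter_not
      (s := (Finset.univ : Finset (Fin (2*m)))) (p := fun j : Fin (2*m) => (j:ℕ) < m)
    simp only [Finset.card_univ, Fintype.card_fin] at this
    omega
  rw [h1, h2]; simp [nsmul_eq_mul]

/-- The counting argument: if `Y'` is symmetric positive semidefinite with diagonal
entries at most `k`, entries at least `θ + 1` across the two halves and at most
`θ - 1` within each half (for `θ ∈ [-k+1, k-1]`, `n = 2m`), then testing against the
vector `q` of `m` ones followed by `m` minus-ones gives
`0 ≤ qᵀ Y' q ≤ nk + (n²/2 - n)(θ-1) - (n²/2)(θ+1) = nk - n² - n(θ-1) ≤ 2nk - n²`,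
whence `k ≥ n/2`. -/
theorem counting_argument (m k : ℕ) (hm : 0 < m) (hk : 0 < k)
    (Y : Fin (2 * m) → Fin (2 * m) → ℝ)
    (hsymm : ∀ i j, Y i j = Y j i)
    (hpsd : ∀ x : Fin (2 * m) → ℝ, 0 ≤ ∑ i, ∑ j, x i * Y i j * x j)
    (θ : ℝ) (hθ1 : -(k : ℝ) + 1 ≤ θ) (hθ2 : θ ≤ (k : ℝ) - 1)
    (hdiag : ∀ i, Y i i ≤ (k : ℝ))
    (hcross : ∀ i j : Fin (2 * m), i ≠ j → ¬((i : ℕ) < m ↔ (j : ℕ) < m) →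
      θ + 1 ≤ Y i j)
    (hsame : ∀ i j : Fin (2 * m), i ≠ j → ((i : ℕ) < m ↔ (j : ℕ) < m) →
      Y i j ≤ θ - 1) :
    let n : ℝ := 2 * m
    let q : Fin (2 * m) → ℝ := fun i => if (i : ℕ) < m then 1 else -1
    0 ≤ ∑ i, ∑ j, q i * Y i j * q j ∧
    (∑ i, ∑ j, q i * Y i j * q j) ≤
      n * k + (n ^ 2 / 2 - n) * (θ - 1) - (n ^ 2 / 2) * (θ + 1) ∧
    n * k + (n ^ 2 / 2 - n) * (θ - 1) - (n ^ 2 / 2) * (θ + 1) =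
      n * k - n ^ 2 - n * (θ - 1) ∧
    n * k - n ^ 2 - n * (θ - 1) ≤ 2 * n * k - n ^ 2 ∧
    n / 2 ≤ (k : ℝ) := by
  intro n q
  have hmR : (1:ℝ) ≤ (m:ℝ) := by exact_mod_cast hm
  have hpos : 0 ≤ ∑ i, ∑ j, q i * Y i j * q j := hpsd q
  have hub : (∑ i, ∑ j, q i * Y i j * q j) ≤
      n * k + (n ^ 2 / 2 - n) * (θ - 1) - (n ^ 2 / 2) * (θ + 1) := by
    have step : ∀ i : Fin (2*m), (∑ j, q i * Y i j * q j) ≤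
        ((k:ℝ) - (θ - 1)) + ∑ j : Fin (2*m),
          (if (j:ℕ) < m then (if (i:ℕ) < m then θ - 1 else -(θ+1))
           else (if (i:ℕ) < m then -(θ+1) else θ - 1)) := by
      intro i
      have : (∑ j, q i * Y i j * q j) ≤ ∑ j : Fin (2*m),
          ((if i = j then (k:ℝ) - (θ - 1) else 0) +
           (if (j:ℕ) < m then (if (i:ℕ) < m then θ - 1 else -(θ+1))
            else (if (i:ℕ) < m then -(θ+1) else θ - 1))) := by
        apply Finset.sum_le_sum
        intro j _
        by_cases hij : i = j
        · subst hij
          by_cases hi : (i:ℕ) < m <;> simp [q, hi] <;>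
            [skip; skip] <;> linarith [hdiag i]
        · by_cases hi : (i:ℕ) < m <;> by_cases hj : (j:ℕ) < m <;>
            simp [q, hi, hj, hij]
          · linarith [hsame i j hij (by tauto)]
          · linarith [hcross i j hij (by simp [hi, hj])]
          · linarith [hcross i j hij (by simp [hi, hj])]
          · linarith [hsame i j hij (by tauto)]
      calc (∑ j, q i * Y i j * q j) ≤ _ := this
        _ = _ := by
          rw [Finset.sum_add_distrib, Finset.sum_ite_eq]
          simp
    have step2 : (∑ i, ∑ j, q i * Y i j * q j) ≤
        ∑ i : Fin (2*m), (((k:ℝ) - (θ - 1)) + ((m:ℝ) * (θ-1) + (m:ℝ) * (-(θ+1)))) := by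
      apply Finset.sum_le_sum
      intro i _
      refine (step i).trans (le_of_eq ?_)
      by_cases hi : (i:ℕ) < m <;> simp only [hi, if_true, if_false] <;>
        rw [sum_if_lt] <;> ring
    refine step2.trans (le_of_eq ?_)
    rw [Finset.sum_const, Finset.card_univ, Fintype.card_fin, nsmul_eq_mul]
    show _ = (2*(m:ℝ)) * k + ((2*(m:ℝ)) ^ 2 / 2 - 2*(m:ℝ)) * (θ - 1) -
      ((2*(m:ℝ)) ^ 2 / 2) * (θ + 1)
    push_cast
    ring
  have heq : n * k + (n ^ 2 / 2 - n) * (θ - 1) - (n ^ 2 / 2) * (θ + 1) =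
      n * k - n ^ 2 - n * (θ - 1) := by show _ = _; ring
  have hnpos : (0:ℝ) < n := by show (0:ℝ) < 2*m; positivity
  have h3 : n * k - n ^ 2 - n * (θ - 1) ≤ 2 * n * k - n ^ 2 := by
    nlinarith
  refine ⟨hpos, hub, heq, h3, ?_⟩
  have : (0:ℝ) ≤ 2 * n * k - n ^ 2 := by
    calc (0:ℝ) ≤ ∑ i, ∑ j, q i * Y i j * q j := hpos
      _ ≤ _ := hub
      _ = _ := heq
      _ ≤ _ := h3
  nlinarith
end
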